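/- arXiv:math/0509236 — 3 statements merged into one kernel-verified Lean document; each statement's English description precedes it below -/
import Mathlib

section
/- For every x ∈ H and n ≥ 0, ‖x - x_n‖² = ‖x‖² - ∑_{j=0}^{n} |⟨x, g_j⟩|². -/
open scoped ComplexInnerProductSpace

/-- The Kaczmarz algorithm iterates. -/
noncomputable def kacz {H : Type*} [NormedAddCommGroup H] [InnerProductSpace ℂ H]
    (e : ℕ → H) (x : H) : ℕ → H
  | 0 => ⟪e 0, x⟫ • e 0
  | (n+1) => kacz e x n + ⟪e (n+1), x - kacz e x n⟫ • e (n+1)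

private lemma proj_lemma {H : Type*} [NormedAddCommGroup H] [InnerProductSpace ℂ H]
    (e y : H) (he : ‖e‖ = 1) :
    ‖y - ⟪e, y⟫ • e‖ ^ 2 = ‖y‖ ^ 2 - ‖⟪e, y⟫‖ ^ 2 := by
  have h := @norm_sub_sq ℂ _ _ _ _ y (⟪e, y⟫ • e)
  rw [h, inner_smul_right, norm_smul, he, mul_one, ← inner_conj_symm e y]
  simp only [RCLike.conj_mul, RCLike.norm_conj, ← RCLike.ofReal_pow, RCLike.ofReal_re]
  ring

private lemma kacz_eq {H : Type*} [NormedAddCommGroup H] [InnerProductSpace ℂ H]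
    (e g : ℕ → H)
    (hg0 : g 0 = e 0)
    (hg : ∀ n, 0 < n → g n = e n - ∑ i ∈ Finset.range n, ⟪e i, e n⟫ • g i)
    (x : H) : ∀ n, kacz e x n = ∑ i ∈ Finset.range (n+1), ⟪g i, x⟫ • e i := by
  intro n
  induction n with
  | zero => simp [kacz, hg0]
  | succ n ih =>
    have hc : ⟪e (n+1), x - kacz e x n⟫ = ⟪g (n+1), x⟫ := by
      rw [ih, hg (n+1) (Nat.succ_pos n), inner_sub_left, inner_sub_right,
        inner_sum, sum_inner]
      congr 1
      apply Finset.sum_congr rfl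
      intro i _
      rw [inner_smul_right, inner_smul_left, ← inner_conj_symm (e (n+1)) (e i)]
      ring
    rw [kacz, hc, ih, Finset.sum_range_succ _ (n+1)]

theorem kaczmarz_error_norm_sq
    {H : Type*} [NormedAddCommGroup H] [InnerProductSpace ℂ H]
    (e g : ℕ → H) (he : ∀ n, ‖e n‖ = 1)
    (hg0 : g 0 = e 0)
    (hg : ∀ n, 0 < n → g n = e n - ∑ i ∈ Finset.range n, ⟪e i, e n⟫ • g i) :
    ∀ (x : H) (n : ℕ),
      ‖x - kacz e x n‖ ^ 2 = ‖x‖ ^ 2 - ∑ j ∈ Finset.range (n + 1), ‖⟪g j, x⟫‖ ^ 2 := by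
  intro x n
  induction n with
  | zero =>
    simpa [kacz, Finset.sum_range_one, hg0] using proj_lemma (e 0) x (he 0)
  | succ n ih =>
    have hc : ⟪e (n+1), x - kacz e x n⟫ = ⟪g (n+1), x⟫ := by
      rw [kacz_eq e g hg0 hg x n, hg (n+1) (Nat.succ_pos n), inner_sub_left,
        inner_sub_right, inner_sum, sum_inner]
      congr 1
      apply Finset.sum_congr rfl
      intro i _
      rw [inner_smul_right, inner_smul_left, ← inner_conj_symm (e (n+1)) (e i)]
      ring
    have : x - kacz e x (n+1) = (x - kacz e x n) - ⟪e (n+1), x - kacz e x n⟫ • e (n+1) := by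
      rw [kacz]; abel
    rw [this, proj_lemma (e (n+1)) (x - kacz e x n) (he (n+1)),
      Finset.sum_range_succ, hc, ih]
    ring
end

section
/- A sequence {e_n} of unit vectors is effective (i.e., x_n → x for all x) if and only if ‖x‖² = ∑_{n=0}^∞ |⟨x, g_n⟩|² for all x ∈ H, i.e., if and only if {g_n} is a normalized tight frame (Parseval frame) for H. -/
open scoped ComplexInnerProductSpace

section Aux

variable {H : Type*} [NormedAddCommGroup H] [InnerProductSpace ℂ H]

/-- The Kaczmarz coefficients. -/
noncomputable def dcoef (e : ℕ → H) (x : H) : ℕ → ℂ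
  | 0 => ⟪e 0, x⟫
  | (n+1) => ⟪e (n+1), x - kacz e x n⟫

lemma kacz_eq_sum (e : ℕ → H) (x : H) (n : ℕ) :
    kacz e x n = ∑ i ∈ Finset.range (n+1), dcoef e x i • e i := by
  induction n with
  | zero => simp [kacz, dcoef]
  | succ n ih => rw [Finset.sum_range_succ, ← ih]; rfl

lemma dcoef_rec (e : ℕ → H) (x : H) (n : ℕ) :
    dcoef e x n = ⟪e n, x⟫ - ∑ i ∈ Finset.range n, ⟪e n, e i⟫ * dcoef e x i := by
  cases n with
  | zero => simp [dcoef]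
  | succ n =>
    rw [show dcoef e x (n+1) = ⟪e (n+1), x - kacz e x n⟫ from rfl,
      inner_sub_right, kacz_eq_sum, inner_sum]
    congr 1
    exact Finset.sum_congr rfl fun i _ => by rw [inner_smul_right, mul_comm]

lemma inner_g_eq (e g : ℕ → H) (hg0 : g 0 = e 0)
    (hg : ∀ n, 0 < n → g n = e n - ∑ i ∈ Finset.range n, ⟪e i, e n⟫ • g i)
    (x : H) : ∀ n, ⟪g n, x⟫ = dcoef e x n := by
  intro n
  induction n using Nat.strong_induction_on with
  | _ n ih =>
    rcases Nat.eq_zero_or_pos n with h | h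
    · subst h; rw [hg0]; rfl
    · rw [hg n h, dcoef_rec, inner_sub_left, sum_inner]
      congr 1
      exact Finset.sum_congr rfl fun i hi => by
        rw [inner_smul_left, ih i (Finset.mem_range.mp hi), inner_conj_symm]

lemma inner_e_sub (e : ℕ → H) (he : ∀ n, ‖e n‖ = 1) (x : H) (n : ℕ) :
    ⟪e n, x - kacz e x n⟫ = 0 := by
  cases n with
  | zero =>
    simp [kacz, inner_sub_right, inner_smul_right, inner_self_eq_norm_sq_to_K, he 0]
  | succ n =>
    have h : x - kacz e x (n+1)
        = (x - kacz e x n) - (⟪e (n+1), x - kacz e x n⟫ : ℂ) • e (n+1) := by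
      rw [show kacz e x (n+1)
        = kacz e x n + ⟪e (n+1), x - kacz e x n⟫ • e (n+1) from rfl]
      abel
    rw [h, inner_sub_right, inner_smul_right, inner_self_eq_norm_sq_to_K, he (n+1)]
    push_cast
    ring

lemma norm_sq_split (e : ℕ → H) (he : ∀ n, ‖e n‖ = 1) (x : H) (n : ℕ) :
    ‖x‖^2 = ‖x - kacz e x n‖^2 + ∑ i ∈ Finset.range (n+1), ‖dcoef e x i‖^2 := by
  induction n with
  | zero =>
    have h0 : x = (x - kacz e x 0) + dcoef e x 0 • e 0 := by
      rw [show kacz e x 0 = (⟪e 0, x⟫ : ℂ) • e 0 from rfl]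
      show x = _ + (⟪e 0, x⟫ : ℂ) • e 0
      abel
    have horth : ⟪x - kacz e x 0, dcoef e x 0 • e 0⟫ = 0 := by
      rw [inner_smul_right, ← inner_conj_symm, inner_e_sub e he x 0]
      simp
    have := norm_add_sq_eq_norm_sq_add_norm_sq_of_inner_eq_zero
      (x - kacz e x 0) (dcoef e x 0 • e 0) horth
    rw [← h0] at this
    rw [show (0:ℕ)+1 = 1 from rfl, Finset.sum_range_one, pow_two, pow_two, pow_two, this,
      norm_smul, he 0]
    ring
  | succ n ih =>
    have h0 : x - kacz e x n = (x - kacz e x (n+1)) + dcoef e x (n+1) • e (n+1) := by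
      rw [show kacz e x (n+1)
        = kacz e x n + (⟪e (n+1), x - kacz e x n⟫ : ℂ) • e (n+1) from rfl,
        show dcoef e x (n+1) = (⟪e (n+1), x - kacz e x n⟫ : ℂ) from rfl]
      abel
    have horth : ⟪x - kacz e x (n+1), dcoef e x (n+1) • e (n+1)⟫ = 0 := by
      rw [inner_smul_right, ← inner_conj_symm, inner_e_sub e he x (n+1)]
      simp
    have key := norm_add_sq_eq_norm_sq_add_norm_sq_of_inner_eq_zero
      (x - kacz e x (n+1)) (dcoef e x (n+1) • e (n+1)) horth
    rw [← h0] at key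
    have hstep : ‖x - kacz e x n‖^2 = ‖x - kacz e x (n+1)‖^2 + ‖dcoef e x (n+1)‖^2 := by
      rw [pow_two, pow_two, pow_two, key, norm_smul, he (n+1)]
      ring
    rw [Finset.sum_range_succ (fun i => ‖dcoef e x i‖^2) (n+1), ih, hstep]
    linarith

end Aux

theorem kaczmarz_effective_iff_parseval
    {H : Type*} [NormedAddCommGroup H] [InnerProductSpace ℂ H] [CompleteSpace H]
    (e g : ℕ → H) (he : ∀ n, ‖e n‖ = 1)
    (hdense : (Submodule.span ℂ (Set.range e)).topologicalClosure = ⊤)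
    (hg0 : g 0 = e 0)
    (hg : ∀ n, 0 < n → g n = e n - ∑ i ∈ Finset.range n, ⟪e i, e n⟫ • g i) :
    (∀ x : H, Filter.Tendsto (kacz e x) Filter.atTop (nhds x)) ↔
      (∀ x : H, HasSum (fun n => ‖⟪g n, x⟫‖ ^ 2) (‖x‖ ^ 2)) := by
  have key : ∀ (x : H) (n : ℕ),
      ∑ i ∈ Finset.range (n+1), ‖⟪g i, x⟫‖^2 = ‖x‖^2 - ‖x - kacz e x n‖^2 := by
    intro x n
    have h1 := norm_sq_split e he x n
    have h2 : ∀ i, ‖⟪g i, x⟫‖^2 = ‖dcoef e x i‖^2 := fun i => by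
      rw [inner_g_eq e g hg0 hg x i]
    simp only [h2]
    linarith
  constructor
  · intro h x
    rw [hasSum_iff_tendsto_nat_of_nonneg (fun i => by positivity)]
    rw [← Filter.tendsto_add_atTop_iff_nat 1]
    have hnorm : Filter.Tendsto (fun n => ‖x - kacz e x n‖^2) Filter.atTop (nhds 0) := by
      have h1 : Filter.Tendsto (fun n => ‖x - kacz e x n‖) Filter.atTop (nhds 0) := by
        have := (h x).sub tendsto_const_nhds (g := fun _ => x)
        simp only [sub_self] at this
        simpa [norm_sub_rev] using this.norm
      simpa using h1.pow 2
    have := (tendsto_const_nhds (x := ‖x‖^2) (f := Filter.atTop (α := ℕ))).sub hnorm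
    simp only [sub_zero] at this
    refine this.congr fun n => ?_
    rw [key x n]
  · intro h x
    have hs := (hasSum_iff_tendsto_nat_of_nonneg
      (f := fun n => ‖⟪g n, x⟫‖^2) (fun i => by positivity) (‖x‖^2)).mp (h x)
    have hs' : Filter.Tendsto (fun n => ∑ i ∈ Finset.range (n+1), ‖⟪g i, x⟫‖^2)
        Filter.atTop (nhds (‖x‖^2)) := by
      exact (Filter.tendsto_add_atTop_iff_nat 1).mpr hs
    have hnsq : Filter.Tendsto (fun n => ‖x - kacz e x n‖^2) Filter.atTop (nhds 0) := by
      have := (tendsto_const_nhds (x := ‖x‖^2) (f := Filter.atTop (α := ℕ))).sub hs'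
      simp only [sub_self] at this
      refine this.congr fun n => ?_
      rw [key x n]
      ring
    have hn : Filter.Tendsto (fun n => ‖x - kacz e x n‖) Filter.atTop (nhds 0) := by
      have := (Real.continuous_sqrt.tendsto 0).comp hnsq
      simp only [Real.sqrt_zero] at this
      refine this.congr fun n => ?_
      simp [Real.sqrt_sq (norm_nonneg _)]
    rw [tendsto_iff_norm_sub_tendsto_zero]
    simpa [norm_sub_rev] using hn
end

section
/- The Bessel sequence {g_n} is stable if and only if the sequence {e_n} is stable and ⟨e_n, e_{n+1}⟩ ≠ 0 for all n ≥ 0. -/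
/-!
Let `R n = (1 - P_{n-1}) ⋯ (1 - P_0)` with `P_i = ⟪e i, ·⟫ • e i`. Unrolling the recurrence gives
`⟪g n, x⟫ = ⟪e n, R n x⟫`, and `R m x` stays equal to `R N x` for `m ≥ N` exactly when `R N x` is
orthogonal to every `e m`, `m ≥ N`. Hence `{g 0} ∪ {g n : n ≥ N}` is dense iff no nonzero
`x ⊥ e 0` has `R N x ⊥ e m` for all `m ≥ N`. While consecutive inner products do not vanish,
`R (n + 1)` maps `(e 0)ᗮ` bijectively onto `(e n)ᗮ`, which turns this into the density of
`{e m : m ≥ N}`; at the first `n` with `e n ⊥ e (n + 1)`, the preimage of `e (n + 1)` in `(e 0)ᗮ`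
under `R (n + 1)` is a nonzero vector killed by `R (n + 2)`.
-/

open scoped InnerProductSpace
open InnerProductSpace

theorem Submodule.span_topologicalClosure_eq_top_iff {𝕜 H : Type*} [RCLike 𝕜]
    [NormedAddCommGroup H] [InnerProductSpace 𝕜 H] [CompleteSpace H] {s : Set H} :
    (span 𝕜 s).topologicalClosure = ⊤ ↔ ∀ x, (∀ v ∈ s, ⟪v, x⟫_𝕜 = 0) → x = 0 := by
  simp only [topologicalClosure_eq_top_iff, Submodule.eq_bot_iff, ← span_singleton_le_iff_mem,
    ← isOrtho_iff_le, isOrtho_comm (U := span 𝕜 {_}), isOrtho_span, Set.mem_singleton_iff,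
    forall_eq]

namespace Kaczmarz

variable (𝕜 : Type*) {H : Type*} [RCLike 𝕜] [NormedAddCommGroup H] [InnerProductSpace 𝕜 H]

noncomputable def residual (e : ℕ → H) : ℕ → H →L[𝕜] H
  | 0 => 1
  | n + 1 => (1 - rankOne 𝕜 (e n) (e n)) * residual e n

variable {𝕜} (e : ℕ → H)

@[simp]
theorem residual_zero_apply (x : H) : residual 𝕜 e 0 x = x := rfl

theorem residual_succ_apply (n : ℕ) (x : H) :
    residual 𝕜 e (n + 1) x = residual 𝕜 e n x - ⟪e n, residual 𝕜 e n x⟫_𝕜 • e n := rfl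

variable {e}

theorem inner_residual_succ_self {n : ℕ} (hn : ‖e n‖ = 1) (x : H) :
    ⟪e n, residual 𝕜 e (n + 1) x⟫_𝕜 = 0 := by
  simp [residual_succ_apply, inner_sub_right, inner_smul_right, inner_self_eq_norm_sq_to_K, hn]

theorem residual_succ_apply_of_inner_eq_zero {n : ℕ} {x : H}
    (hx : ⟪e n, residual 𝕜 e n x⟫_𝕜 = 0) : residual 𝕜 e (n + 1) x = residual 𝕜 e n x := by
  rw [residual_succ_apply, hx, zero_smul, sub_zero]

theorem inner_residual_apply (z x : H) (m : ℕ) :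
    ⟪z, residual 𝕜 e m x⟫_𝕜 =
      ⟪z, x⟫_𝕜 - ∑ i ∈ Finset.range m, ⟪e i, residual 𝕜 e i x⟫_𝕜 * ⟪z, e i⟫_𝕜 := by
  induction m with
  | zero => simp
  | succ m ih =>
    rw [residual_succ_apply, inner_sub_right, inner_smul_right, ih, Finset.sum_range_succ]
    ring

theorem inner_eq_inner_residual {g : ℕ → H} (hg0 : g 0 = e 0)
    (hg : ∀ n, 0 < n → g n = e n - ∑ i ∈ Finset.range n, ⟪e i, e n⟫_𝕜 • g i) (n : ℕ) (x : H) :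
    ⟪g n, x⟫_𝕜 = ⟪e n, residual 𝕜 e n x⟫_𝕜 := by
  induction n using Nat.strong_induction_on with
  | _ n ih =>
    rcases Nat.eq_zero_or_pos n with rfl | hn
    · simp [hg0]
    rw [hg n hn, inner_sub_left, sum_inner, inner_residual_apply]
    congr 1
    refine Finset.sum_congr rfl fun i hi => ?_
    rw [inner_smul_left, ih i (Finset.mem_range.mp hi), inner_conj_symm, mul_comm]

theorem forall_inner_residual_self_eq_zero_iff (N : ℕ) (x : H) :
    (∀ m, N ≤ m → ⟪e m, residual 𝕜 e m x⟫_𝕜 = 0) ↔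
      ∀ m, N ≤ m → ⟪e m, residual 𝕜 e N x⟫_𝕜 = 0 := by
  constructor
  · intro h m hm
    suffices residual 𝕜 e m x = residual 𝕜 e N x from this ▸ h m hm
    induction m, hm using Nat.le_induction with
    | base => rfl
    | succ m hm ih => rw [residual_succ_apply_of_inner_eq_zero (h m hm), ih]
  · intro h m hm
    suffices residual 𝕜 e m x = residual 𝕜 e N x from this ▸ h m hm
    induction m, hm using Nat.le_induction with
    | base => rfl
    | succ m hm ih => rw [residual_succ_apply_of_inner_eq_zero (ih ▸ h m hm), ih]

theorem exists_residual_succ_eq (he : ∀ n, ‖e n‖ = 1) {n : ℕ}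
    (hne : ∀ i < n, ⟪e i, e (i + 1)⟫_𝕜 ≠ 0) {y : H} (hy : ⟪e n, y⟫_𝕜 = 0) :
    ∃ x, ⟪e 0, x⟫_𝕜 = 0 ∧ residual 𝕜 e (n + 1) x = y := by
  induction n generalizing y with
  | zero => exact ⟨y, hy, by simp [residual_succ_apply, hy]⟩
  | succ n ih =>
    -- correct `y` along `e (n + 1)` to make it orthogonal to `e n`
    obtain ⟨x, hx0, hx⟩ := ih (fun i hi => hne i (hi.trans n.lt_succ_self))
      (y := y + (-⟪e n, y⟫_𝕜 / ⟪e n, e (n + 1)⟫_𝕜) • e (n + 1))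
      (by rw [inner_add_right, inner_smul_right, div_mul_cancel₀ _ (hne n n.lt_succ_self),
        add_neg_cancel])
    refine ⟨x, hx0, ?_⟩
    rw [residual_succ_apply, hx, inner_add_right, inner_smul_right, hy,
      inner_self_eq_norm_sq_to_K, he]
    simp

theorem eq_zero_of_residual_succ_eq_zero (he : ∀ n, ‖e n‖ = 1) {n : ℕ}
    (hne : ∀ i < n, ⟪e i, e (i + 1)⟫_𝕜 ≠ 0) {x : H} (hx0 : ⟪e 0, x⟫_𝕜 = 0)
    (hx : residual 𝕜 e (n + 1) x = 0) : x = 0 := by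
  induction n with
  | zero => simpa [residual_succ_apply, hx0] using hx
  | succ n ih =>
    set c := ⟪e (n + 1), residual 𝕜 e (n + 1) x⟫_𝕜
    have hc : residual 𝕜 e (n + 1) x = c • e (n + 1) := by
      rw [residual_succ_apply, sub_eq_zero] at hx
      exact hx
    have hc0 : c = 0 := by
      have := inner_residual_succ_self (𝕜 := 𝕜) (he n) x
      rw [hc, inner_smul_right, mul_eq_zero] at this
      exact this.resolve_right (hne n n.lt_succ_self)
    exact ih (fun i hi => hne i (hi.trans n.lt_succ_self)) (by rw [hc, hc0, zero_smul])

theorem span_insert_image_topologicalClosure_eq_top_iff [CompleteSpace H] {g : ℕ → H}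
    (hg0 : g 0 = e 0)
    (hg : ∀ n, 0 < n → g n = e n - ∑ i ∈ Finset.range n, ⟪e i, e n⟫_𝕜 • g i) (N : ℕ) :
    (Submodule.span 𝕜 (insert (g 0) (g '' {n | N ≤ n}))).topologicalClosure = ⊤ ↔
      ∀ x, ⟪e 0, x⟫_𝕜 = 0 → (∀ m, N ≤ m → ⟪e m, residual 𝕜 e N x⟫_𝕜 = 0) → x = 0 := by
  simp only [Submodule.span_topologicalClosure_eq_top_iff, Set.forall_mem_insert,
    Set.forall_mem_image, Set.mem_ofPred_eq, inner_eq_inner_residual hg0 hg, residual_zero_apply,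
    forall_inner_residual_self_eq_zero_iff, and_imp]

theorem inner_succ_ne_zero_of_stable (he : ∀ n, ‖e n‖ = 1)
    (hG : ∀ N x, ⟪e 0, x⟫_𝕜 = 0 → (∀ m, N ≤ m → ⟪e m, residual 𝕜 e N x⟫_𝕜 = 0) → x = 0)
    (n : ℕ) : ⟪e n, e (n + 1)⟫_𝕜 ≠ 0 := by
  induction n using Nat.strong_induction_on with
  | _ n ih =>
    intro h
    obtain ⟨x, hx0, hx⟩ := exists_residual_succ_eq he ih h
    have hx2 : residual 𝕜 e (n + 2) x = 0 := by
      rw [residual_succ_apply, hx, inner_self_eq_norm_sq_to_K, he]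
      simp
    have := he (n + 1)
    rw [← hx, hG (n + 2) x hx0 (by simp [hx2]), map_zero, norm_zero] at this
    exact zero_ne_one this

theorem eq_zero_of_forall_inner_eq_zero_of_stable (he : ∀ n, ‖e n‖ = 1)
    (hG : ∀ N x, ⟪e 0, x⟫_𝕜 = 0 → (∀ m, N ≤ m → ⟪e m, residual 𝕜 e N x⟫_𝕜 = 0) → x = 0)
    {N : ℕ} {y : H} (hy : ∀ m, N ≤ m → ⟪e m, y⟫_𝕜 = 0) : y = 0 := by
  obtain ⟨x, hx0, rfl⟩ :=
    exists_residual_succ_eq he (fun i _ => inner_succ_ne_zero_of_stable he hG i) (hy N le_rfl)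
  rw [hG (N + 1) x hx0 fun m hm => hy m (Nat.le_of_succ_le hm), map_zero]

theorem eq_zero_of_forall_inner_residual_eq_zero (he : ∀ n, ‖e n‖ = 1)
    (hE : ∀ N y, (∀ m, N ≤ m → ⟪e m, y⟫_𝕜 = 0) → y = 0) (hne : ∀ n, ⟪e n, e (n + 1)⟫_𝕜 ≠ 0)
    (N : ℕ) {x : H} (hx0 : ⟪e 0, x⟫_𝕜 = 0)
    (hx : ∀ m, N ≤ m → ⟪e m, residual 𝕜 e N x⟫_𝕜 = 0) : x = 0 := by
  have hRx := hE N _ hx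
  cases N with
  | zero => exact hRx
  | succ N => exact eq_zero_of_residual_succ_eq_zero he (fun i _ => hne i) hx0 hRx

end Kaczmarz

open scoped ComplexInnerProductSpace

open Kaczmarz in
theorem kaczmarz_stability_iff
    {H : Type*} [NormedAddCommGroup H] [InnerProductSpace ℂ H] [CompleteSpace H]
    (e g : ℕ → H) (he : ∀ n, ‖e n‖ = 1)
    (hg0 : g 0 = e 0)
    (hg : ∀ n, 0 < n → g n = e n - ∑ i ∈ Finset.range n, ⟪e i, e n⟫ • g i) :
    (∀ N : ℕ,
        (Submodule.span ℂ (insert (g 0) (g '' {n | N ≤ n}))).topologicalClosure = ⊤) ↔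
      ((∀ N : ℕ, (Submodule.span ℂ (e '' {n | N ≤ n})).topologicalClosure = ⊤) ∧
        ∀ n : ℕ, ⟪e n, e (n + 1)⟫ ≠ 0) := by
  simp only [span_insert_image_topologicalClosure_eq_top_iff hg0 hg,
    Submodule.span_topologicalClosure_eq_top_iff, Set.forall_mem_image, Set.mem_ofPred_eq]
  exact ⟨fun hG => ⟨fun _ _ => eq_zero_of_forall_inner_eq_zero_of_stable he hG,
      inner_succ_ne_zero_of_stable he hG⟩,
    fun ⟨hE, hne⟩ N _ => eq_zero_of_forall_inner_residual_eq_zero he hE hne N⟩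
end
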